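/- Assume the following weak form of the Filter Dichotomy: for every uniform filter F on ℕ there exists a function h : ℕ → ℕ such that h⁻¹[ℕ \ {n}] ∈ F for all n ∈ ℕ and {h[x] : x ∈ F} is either the filter of cofinite subsets of ℕ or a nonprincipal ultrafilter on ℕ. Then for every f : P(ω) → [0,1] satisfying f(x ∪ y) = f(x) + f(y) for disjoint x, y ⊆ ℕ, f({n}) = 0 for all n ∈ ℕ, and f(ℕ) = 1, the filter {x ⊆ ℕ : f(x) = 1} is not a universally measurable subset of the Cantor space P(ω). -/

import Mathlib

open MeasureTheory Set

/-- Identify a subset of ℕ with a point of the Cantor space `ℕ → Bool`. -/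
noncomputable def toCantor (x : Set ℕ) : ℕ → Bool :=
  fun n => @decide (n ∈ x) (Classical.dec _)

/-- A subset of a topological space is universally measurable if it is measurable with
respect to (the completion of) every σ-finite Borel measure on the space. -/
def UMSet {X : Type*} [TopologicalSpace X] (A : Set X) : Prop :=
  letI : MeasurableSpace X := borel X
  ∀ μ : Measure X, SigmaFinite μ → NullMeasurableSet A μ

/-- A (proper, set-theoretic) filter on ℕ. -/
def IsSetFilter (F : Set (Set ℕ)) : Prop :=
  Set.univ ∈ F ∧ ∅ ∉ F ∧ (∀ x ∈ F, ∀ y : Set ℕ, x ⊆ y → y ∈ F) ∧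
    (∀ x ∈ F, ∀ y ∈ F, x ∩ y ∈ F)

/-- A uniform filter on ℕ: a filter containing all cofinite sets. -/
def IsUniformFilter (F : Set (Set ℕ)) : Prop :=
  IsSetFilter F ∧ ∀ x : Set ℕ, xᶜ.Finite → x ∈ F

/-- An ultrafilter on ℕ. -/
def IsUltrafilterSet (G : Set (Set ℕ)) : Prop :=
  IsSetFilter G ∧ ∀ x : Set ℕ, x ∈ G ∨ xᶜ ∈ G

/-- A nonprincipal ultrafilter on ℕ: an ultrafilter containing no finite set. -/
def IsNonprincipalUltrafilterSet (G : Set (Set ℕ)) : Prop :=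
  IsUltrafilterSet G ∧ ∀ x ∈ G, x.Infinite

/-- The family `{h[x] : x ∈ F}` of images of members of `F` under `h`. -/
def imgFam (h : ℕ → ℕ) (F : Set (Set ℕ)) : Set (Set ℕ) :=
  (fun x : Set ℕ => h '' x) '' F

/-- The filter of cofinite subsets of ℕ. -/
def cofinFam : Set (Set ℕ) := {y : Set ℕ | yᶜ.Finite}

open Filter
open scoped symmDiff

/-!
Let `F = {x | f x = 1}`; it is a uniform filter, so the weak Filter Dichotomy gives `h`, and
`g y = f (h⁻¹ y)` is again a diffuse finitely additive probability whose filter `{y | g y = 1}`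
is the image filter `{h[x] | x ∈ F}`. It cannot be the cofinite filter: then `g` would be
positive on each member of an uncountable almost disjoint family, while finite additivity
allows only countably many such sets. So it is a nonprincipal ultrafilter `U`. The continuous
map `c ↦ c ∘ h` of the Cantor group pulls the code of `F` back to the code of `U`, so the
latter would be Haar measurable. But the code of `U` is invariant under the dense subgroup of
finitely supported translations, hence null or conull by ergodicity of Haar measure, while
translation by the all-ones sequence maps it onto its complement.
-/

structure IsDiffuseCharge (f : Set ℕ → ℝ) : Prop where
  mem_Icc : ∀ x, f x ∈ Icc (0 : ℝ) 1
  map_union : ∀ x y, Disjoint x y → f (x ∪ y) = f x + f y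
  map_singleton : ∀ n, f {n} = 0
  map_univ : f univ = 1

namespace IsDiffuseCharge

variable {f : Set ℕ → ℝ} (hf : IsDiffuseCharge f)
include hf

lemma map_empty : f ∅ = 0 := by
  have := hf.map_union ∅ ∅ (disjoint_empty _)
  rw [union_empty] at this
  linarith

lemma map_compl (x : Set ℕ) : f xᶜ = 1 - f x := by
  have := hf.map_union x xᶜ disjoint_compl_right
  rw [union_compl_self, hf.map_univ] at this
  linarith

lemma map_inter_add_map_diff (x y : Set ℕ) : f (x ∩ y) + f (x \ y) = f x := by
  rw [← hf.map_union _ _ (disjoint_sdiff_inter.symm), inter_union_sdiff]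

lemma mono {x y : Set ℕ} (hxy : x ⊆ y) : f x ≤ f y := by
  have := hf.map_inter_add_map_diff y x
  rw [inter_eq_right.mpr hxy] at this
  linarith [(hf.mem_Icc (y \ x)).1]

lemma map_finite {x : Set ℕ} (hx : x.Finite) : f x = 0 := by
  induction x, hx using Set.Finite.induction_on with
  | empty => exact hf.map_empty
  | @insert a s ha _ ih =>
    rw [insert_eq, hf.map_union _ _ (disjoint_singleton_left.mpr ha), hf.map_singleton, ih,
      add_zero]

lemma map_union_of_finite_inter {x y : Set ℕ} (hxy : (x ∩ y).Finite) :
    f (x ∪ y) = f x + f y := by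
  have := hf.map_inter_add_map_diff y x
  rw [inter_comm, hf.map_finite hxy, zero_add] at this
  rw [← union_sdiff_self, hf.map_union _ _ disjoint_sdiff_right, this]

lemma map_inter_eq_one {x y : Set ℕ} (hx : f x = 1) (hy : f y = 1) : f (x ∩ y) = 1 := by
  have hxy := hf.map_inter_add_map_diff x y
  have hunion : f (y ∪ x \ y) = f y + f (x \ y) := hf.map_union _ _ disjoint_sdiff_right
  rw [union_sdiff_self] at hunion
  linarith [(hf.mem_Icc (y ∪ x)).2, (hf.mem_Icc (x ∩ y)).2]

lemma isUniformFilter : IsUniformFilter {x | f x = 1} := by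
  refine ⟨⟨hf.map_univ, ?_, fun x hx y hxy => ?_, fun x hx y hy => hf.map_inter_eq_one hx hy⟩,
    fun x hx => ?_⟩
  · simp [hf.map_empty]
  · exact le_antisymm (hf.mem_Icc y).2 (hx ▸ hf.mono hxy)
  · simpa [hf.map_finite hx] using hf.map_compl xᶜ

lemma comap (h : ℕ → ℕ) (hh : ∀ n, f (h ⁻¹' {n}) = 0) : IsDiffuseCharge (fun y => f (h ⁻¹' y)) where
  mem_Icc _ := hf.mem_Icc _
  map_union _ _ hxy := hf.map_union _ _ (hxy.preimage h)
  map_singleton := hh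
  map_univ := hf.map_univ

lemma sum_le_one_of_pairwise_finite_inter {ι : Type*} {A : ι → Set ℕ}
    (hA : Pairwise fun i j => (A i ∩ A j).Finite) (t : Finset ι) : ∑ i ∈ t, f (A i) ≤ 1 := by
  classical
  suffices ∑ i ∈ t, f (A i) = f (⋃ i ∈ t, A i) from this ▸ (hf.mem_Icc _).2
  induction t using Finset.induction_on with
  | empty => simp [hf.map_empty]
  | @insert a s ha ih =>
    have hfin : (A a ∩ ⋃ i ∈ s, A i).Finite := by
      rw [inter_iUnion₂]
      exact s.finite_toSet.biUnion fun _ hi => hA (ne_of_mem_of_not_mem hi ha).symm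
    rw [Finset.sum_insert ha, Finset.set_biUnion_insert, hf.map_union_of_finite_inter hfin, ih]

lemma countable_support_of_pairwise_finite_inter {ι : Type*} {A : ι → Set ℕ}
    (hA : Pairwise fun i j => (A i ∩ A j).Finite) : (Function.support fun i => f (A i)).Countable :=
  (summable_of_sum_le (fun _ => (hf.mem_Icc _).1)
    (hf.sum_le_one_of_pairwise_finite_inter hA)).countable_support

end IsDiffuseCharge

lemma uncountable_nat_to_bool : Uncountable (ℕ → Bool) := by
  refine ⟨fun _ => ?_⟩
  obtain ⟨s, hs⟩ := exists_surjective_nat (ℕ → Bool)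
  obtain ⟨n, hn⟩ := hs fun n => !s n n
  simpa using congrFun hn n

-- The nodes of the binary tree along the branch `x`; distinct branches share finitely many nodes.
def branchCode (x : ℕ → Bool) (n : ℕ) : ℕ := Encodable.encode (List.ofFn fun i : Fin n => x i)

lemma branchCode_injective (x : ℕ → Bool) : Function.Injective (branchCode x) := fun m n h => by
  simpa using congrArg List.length (Encodable.encode_injective h)

lemma finite_range_branchCode_inter {x y : ℕ → Bool} (hxy : x ≠ y) :
    (range (branchCode x) ∩ range (branchCode y)).Finite := by
  obtain ⟨m, hm⟩ := Function.ne_iff.mp hxy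
  refine ((finite_Iic m).image (branchCode x)).subset ?_
  rintro _ ⟨⟨n, rfl⟩, ⟨n', hn'⟩⟩
  have hlist := Encodable.encode_injective hn'
  obtain rfl : n' = n := by simpa using congrArg List.length hlist
  refine ⟨n', mem_Iic.mpr <| not_lt.mp fun hmn => hm ?_, rfl⟩
  exact (congrFun (List.ofFn_inj.mp hlist) ⟨m, hmn⟩).symm

lemma IsDiffuseCharge.setOf_eq_one_ne_cofinFam {f : Set ℕ → ℝ} (hf : IsDiffuseCharge f) :
    {x | f x = 1} ≠ cofinFam := by
  intro hcof
  have hpos : ∀ x : ℕ → Bool, f (range (branchCode x)) ≠ 0 := fun x hx => by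
    have : (range (branchCode x))ᶜ ∈ cofinFam := by
      rw [← hcof, mem_ofPred_eq, hf.map_compl, hx, sub_zero]
    exact infinite_range_of_injective (branchCode_injective x) (by simpa [cofinFam] using this)
  have hcount := hf.countable_support_of_pairwise_finite_inter
    (A := fun x => range (branchCode x)) fun _ _ => finite_range_branchCode_inter
  rw [Function.support_eq_univ hpos] at hcount
  exact not_countable_univ_iff.mpr uncountable_nat_to_bool hcount

lemma imgFam_eq_setOf_preimage_mem {F : Set (Set ℕ)} (h : ℕ → ℕ)
    (hF : ∀ x ∈ F, ∀ y, x ⊆ y → y ∈ F)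
    (himg : ∀ x ∈ imgFam h F, ∀ y, x ⊆ y → y ∈ imgFam h F) :
    imgFam h F = {y | h ⁻¹' y ∈ F} := by
  ext y
  constructor
  · rintro ⟨x, hx, rfl⟩
    exact hF x hx _ (subset_preimage_image h x)
  · exact fun hy => himg _ ⟨_, hy, rfl⟩ y (image_preimage_subset h y)

namespace IsNonprincipalUltrafilterSet

variable {U : Set (Set ℕ)} (hU : IsNonprincipalUltrafilterSet U)
include hU

lemma compl_mem_iff (x : Set ℕ) : xᶜ ∈ U ↔ x ∉ U := by
  refine ⟨fun hxc hx => hU.1.1.2.1 ?_, (hU.1.2 x).resolve_left⟩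
  simpa using hU.1.1.2.2.2 x hx xᶜ hxc

lemma symmDiff_mem_iff {s : Set ℕ} (hs : s.Finite) (x : Set ℕ) : s ∆ x ∈ U ↔ x ∈ U := by
  have hsc : sᶜ ∈ U := (hU.1.2 s).resolve_left fun h => hU.2 s h hs
  have key : ∀ y ∈ U, s ∆ y ∈ U := fun y hy =>
    hU.1.1.2.2.1 _ (hU.1.1.2.2.2 y hy sᶜ hsc) _ fun n hn => mem_symmDiff.mpr (Or.inr hn)
  refine ⟨fun h => ?_, key x⟩
  simpa using key _ h

end IsNonprincipalUltrafilterSet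

def ofCantor (c : ℕ → Bool) : Set ℕ := {n | c n = true}

lemma image_toCantor (S : Set (Set ℕ)) : toCantor '' S = ofCantor ⁻¹' S := by
  have hleft : ∀ x, ofCantor (toCantor x) = x := fun x => by ext n; simp [ofCantor, toCantor]
  ext c
  refine ⟨?_, fun hc => ⟨ofCantor c, hc, ?_⟩⟩
  · rintro ⟨x, hx, rfl⟩
    rwa [mem_preimage, hleft]
  · funext n
    by_cases hn : c n <;> simp [ofCantor, toCantor, hn]

lemma ofCantor_add (c d : ℕ → Bool) : ofCantor (c + d) = ofCantor c ∆ ofCantor d := by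
  ext n
  simp only [ofCantor, mem_symmDiff, mem_ofPred_eq, Pi.add_apply]
  generalize c n = a, d n = b
  revert a b
  decide

lemma ofCantor_true_add (c : ℕ → Bool) : ofCantor ((fun _ => true) + c) = (ofCantor c)ᶜ := by
  ext n
  simp only [ofCantor, mem_compl_iff, mem_ofPred_eq, Pi.add_apply]
  generalize c n = a
  revert a
  decide

lemma dense_setOf_finite_ofCantor : Dense {e : ℕ → Bool | (ofCantor e).Finite} := by
  intro c
  refine mem_closure_of_tendsto (f := fun n i => c i && decide (i < n)) (b := atTop) ?_
    (Eventually.of_forall fun n => (finite_lt_nat n).subset fun i hi => ?_)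
  · refine tendsto_pi_nhds.mpr fun i => tendsto_const_nhds.congr' ?_
    filter_upwards [eventually_gt_atTop i] with n hn
    simp [hn]
  · simp_all [ofCantor]

theorem not_nullMeasurableSet_preimage_ofCantor {U : Set (Set ℕ)}
    (hU : IsNonprincipalUltrafilterSet U) (μ : Measure (ℕ → Bool)) [IsFiniteMeasure μ]
    [μ.InnerRegular] [μ.IsAddLeftInvariant] [NeZero μ] :
    ¬ NullMeasurableSet (ofCantor ⁻¹' U) μ := by
  intro hB
  have hinv : ∀ e ∈ {e : ℕ → Bool | (ofCantor e).Finite},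
      (fun c => e +ᵥ c) ⁻¹' (ofCantor ⁻¹' U) = ofCantor ⁻¹' U := fun e he => by
    ext c
    change ofCantor (e + c) ∈ U ↔ ofCantor c ∈ U
    rw [ofCantor_add]
    exact hU.symmDiff_mem_iff he _
  have hcompl : (fun c => (fun _ => true) + c) ⁻¹' (ofCantor ⁻¹' U) = (ofCantor ⁻¹' U)ᶜ := by
    ext c
    rw [mem_preimage, mem_preimage, ofCantor_true_add]
    exact hU.compl_mem_iff _
  have hBc : μ (ofCantor ⁻¹' U)ᶜ = μ (ofCantor ⁻¹' U) := by
    rw [← hcompl, measure_preimage_add]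
  have hnull : μ (ofCantor ⁻¹' U) = 0 := by
    rcases eventuallyConst_set.mp <| aeconst_of_dense_setOfPred_preimage_vadd_eq hB
      (dense_setOf_finite_ofCantor.mono hinv) with h | h
    · rw [← hBc, ← mem_ae_iff]
      exact h
    · exact measure_eq_zero_iff_ae_notMem.mpr h
  refine NeZero.ne μ (Measure.measure_univ_eq_zero.mp ?_)
  rw [← measure_add_measure_compl₀ hB, hBc, hnull, add_zero]

lemma UMSet.nullMeasurableSet_preimage {X Y : Type*} [TopologicalSpace X] [MeasurableSpace X]
    [OpensMeasurableSpace X] [TopologicalSpace Y] {A : Set Y} (hA : UMSet A) {ψ : X → Y}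
    (hψ : Continuous ψ) (μ : Measure X) [IsFiniteMeasure μ] : NullMeasurableSet (ψ ⁻¹' A) μ := by
  borelize Y
  exact (hA _ inferInstance).preimage (hψ.measurable.quasiMeasurePreserving μ)

/-- The weak Filter Dichotomy (with `h` not required to be finite-to-one) implies that for
every finitely additive `f : 𝒫(ω) → [0,1]` with `f(ω) = 1` vanishing on singletons, the
filter `{x | f x = 1}` is not universally measurable. -/
theorem stmt_13
    (weakFD : ∀ F : Set (Set ℕ), IsUniformFilter F →
      ∃ h : ℕ → ℕ, (∀ n : ℕ, h ⁻¹' ({n}ᶜ) ∈ F) ∧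
        (imgFam h F = cofinFam ∨ IsNonprincipalUltrafilterSet (imgFam h F))) :
    ∀ f : Set ℕ → ℝ, (∀ x : Set ℕ, f x ∈ Set.Icc (0 : ℝ) 1) →
      (∀ x y : Set ℕ, Disjoint x y → f (x ∪ y) = f x + f y) →
      (∀ n : ℕ, f {n} = 0) → f Set.univ = 1 →
      ¬ UMSet (toCantor '' {x : Set ℕ | f x = 1}) := by
  intro f hb hadd hsing huniv hUM
  have hf : IsDiffuseCharge f := ⟨hb, hadd, hsing, huniv⟩
  obtain ⟨h, hfiber, hcof | hU⟩ := weakFD _ hf.isUniformFilter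
  · have hg := hf.comap h fun n => by simpa [hf.map_compl] using hfiber n
    refine hg.setOf_eq_one_ne_cofinFam ?_
    rw [← hcof, imgFam_eq_setOf_preimage_mem h hf.isUniformFilter.1.2.2.1]
    · rfl
    · exact hcof ▸ fun x hx y hxy => hx.subset (compl_subset_compl.mpr hxy)
  · rw [imgFam_eq_setOf_preimage_mem h hf.isUniformFilter.1.2.2.1 hU.1.1.2.2.1] at hU
    refine not_nullMeasurableSet_preimage_ofCantor hU Measure.addHaar ?_
    rw [image_toCantor] at hUM
    exact hUM.nullMeasurableSet_preimage (ψ := fun (c : ℕ → Bool) n => c (h n))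
      (continuous_pi fun n => continuous_apply (h n)) _
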